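/- Let k be a field, n ≥ 1 and x an n×n matrix over k. Then the map l_x : k^{n−1} → k[t] defined by l_x(v) = charpoly(u(v)·x) − charpoly(x) is k-linear, i.e. l_x(v + v') = l_x(v) + l_x(v') and l_x(c·v) = c·l_x(v) for all v, v' ∈ k^{n−1} and c ∈ k. -/

import Mathlib

/-!
Left multiplication by `u(v)` adds the row `(0, v) ᵥ* x` to the first row of `x`, so
`t • 1 - u(v) * x` differs from `t • 1 - x` only in its first row, by `-(0, v) ᵥ* x`.
The determinant is additive in each row, hence `charpoly (u(v) * x) - charpoly x` is the
determinant of `t • 1 - x` with its first row replaced by `-(0, v) ᵥ* x`, which is linear in `v`.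
-/

open Matrix Polynomial

/-- For `v = (v_1, …, v_{n-1}) ∈ k^{n-1}` (here `v j` represents `v_{j+1}` for
`j : Fin (n-1)`), `uPos v` is the `n×n` matrix equal to the identity except that its
first row is `(1, v_1, …, v_{n-1})`; these matrices form the unipotent radical `U_Q`
of the mirabolic subgroup of `GL_n`. -/
def uPos {k : Type*} [CommRing k] {n : ℕ} (v : Fin (n - 1) → k) :
    Matrix (Fin n) (Fin n) k :=
  Matrix.of fun i j =>
    if i = j then 1
    else if (i : ℕ) = 0 then
      (if h : 1 ≤ (j : ℕ) then v ⟨(j : ℕ) - 1, by have := j.isLt; omega⟩ else 0)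
    else 0

namespace Matrix

variable {R : Type*} [CommRing R] {n : Type*} [Fintype n] [DecidableEq n]

theorem charmatrix_updateRow_add (M : Matrix n n R) (i : n) (w : n → R) :
    charmatrix (M.updateRow i (M i + w)) =
      (charmatrix M).updateRow i (charmatrix M i + fun j => -C (w j)) := by
  ext j l : 1
  rcases eq_or_ne j i with rfl | hj
  · by_cases h : j = l <;> simp [h] <;> ring
  · simp [charmatrix_apply, hj]

noncomputable def charpolyRowPerturbation (M : Matrix n n R) (i : n) : (n → R) →ₗ[R] R[X] :=
  (detRowAlternating.toLinearMap (charmatrix M) i).restrictScalars R ∘ₗ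
    LinearMap.compLeft (-Algebra.linearMap R R[X]) n

theorem charpolyRowPerturbation_apply (M : Matrix n n R) (i : n) (w : n → R) :
    charpolyRowPerturbation M i w = (M.updateRow i (M i + w)).charpoly - M.charpoly := by
  rw [charpoly, charmatrix_updateRow_add, det_updateRow_add, updateRow_eq_self, charpoly,
    add_sub_cancel_left]
  rfl

end Matrix

theorem uPos_mul {R : Type*} [CommRing R] {m : ℕ} (v : Fin m → R)
    (x : Matrix (Fin (m + 1)) (Fin (m + 1)) R) :
    uPos v * x = x.updateRow 0 (x 0 + vecCons 0 v ᵥ* x) := by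
  ext i j
  cases i using Fin.cases <;>
    simp [uPos, mul_apply, Fin.sum_univ_succ, vecMul, dotProduct, (Fin.succ_ne_zero _).symm]

theorem stmt9_general {k : Type*} [Field k] {n : ℕ}
    (x : Matrix (Fin n) (Fin n) k) :
    (∀ v v' : Fin (n - 1) → k,
      (uPos (v + v') * x).charpoly - x.charpoly =
        ((uPos v * x).charpoly - x.charpoly) + ((uPos v' * x).charpoly - x.charpoly)) ∧
    (∀ (c : k) (v : Fin (n - 1) → k),
      (uPos (c • v) * x).charpoly - x.charpoly =
        c • ((uPos v * x).charpoly - x.charpoly)) := by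
  cases n with
  | zero => simp [Subsingleton.elim (uPos _ * x) x]
  | succ m =>
    have key (v : Fin m → k) :
        (uPos v * x).charpoly - x.charpoly = charpolyRowPerturbation x 0 (vecCons 0 v ᵥ* x) := by
      rw [uPos_mul, charpolyRowPerturbation_apply]
    refine ⟨fun v v' => ?_, fun c v => ?_⟩
    · rw [key, key, key, ← map_add, ← add_vecMul, cons_add_cons, add_zero]
    · rw [key, key, ← map_smul, ← smul_vecMul, smul_cons, smul_zero]

/-- Let `k` be a field, `n ≥ 1` and `x` an `n×n` matrix over `k`.  Then
the map `l_x : k^{n-1} → k[t]`, `l_x(v) = charpoly(u(v)·x) − charpoly(x)`, is `k`-linear: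
it is additive and commutes with scalar multiplication. -/
theorem stmt9 {k : Type*} [Field k] {n : ℕ} (hn : 1 ≤ n)
    (x : Matrix (Fin n) (Fin n) k) :
    (∀ v v' : Fin (n - 1) → k,
      (uPos (v + v') * x).charpoly - x.charpoly =
        ((uPos v * x).charpoly - x.charpoly) + ((uPos v' * x).charpoly - x.charpoly)) ∧
    (∀ (c : k) (v : Fin (n - 1) → k),
      (uPos (c • v) * x).charpoly - x.charpoly =
        c • ((uPos v * x).charpoly - x.charpoly)) :=
  stmt9_general x
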